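/- Let c ∈ ℂ and R = ℂ[t, t^{-1}, u | u² = t⁴ − 2ct² + 1]. Then for every integer k, in Ω¹_R/dR one has (6 + 2k)·(class of t^k u dt) = −2(k−3)·(class of t^{k−4}u dt) + 4kc·(class of t^{k−2}u dt). -/

import Mathlib

noncomputable section
open Polynomial LaurentPolynomial

/-- The ring `R = ℂ[t,t⁻¹][u]/(u² − (t⁴ − 2ct² + 1))`, realized by adjoining a root `u`
of `X² − (t⁴ − 2ct² + 1)` to the ring of Laurent polynomials `ℂ[t,t⁻¹]`. -/
abbrev DJKM (c : ℂ) : Type :=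
  AdjoinRoot ((X : Polynomial (LaurentPolynomial ℂ)) ^ 2 -
    Polynomial.C (T 4 - 2 * LaurentPolynomial.C c * T 2 + 1))

/-- The element `t^i` of `R`, for `i : ℤ`. -/
def tp (c : ℂ) (i : ℤ) : DJKM c := AdjoinRoot.of _ (T i)

/-- The element `u` of `R`. -/
def uu (c : ℂ) : DJKM c := AdjoinRoot.root _

/-- The subspace `dR ⊆ Ω¹_R` of exact differentials. -/
def dR (c : ℂ) : Submodule ℂ (KaehlerDifferential ℂ (DJKM c)) :=
  LinearMap.range (KaehlerDifferential.D ℂ (DJKM c)).toLinearMap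

/-- The class of `f·dg` in `Ω¹_R/dR`. -/
def cls (c : ℂ) (f g : DJKM c) : KaehlerDifferential ℂ (DJKM c) ⧸ dR c :=
  Submodule.Quotient.mk (f • KaehlerDifferential.D ℂ (DJKM c) g)

/-- `ω_k` : the class of `t^k·u·dt` in `Ω¹_R/dR`. -/
def w (c : ℂ) (k : ℤ) : KaehlerDifferential ℂ (DJKM c) ⧸ dR c :=
  cls c (tp c k * uu c) (tp c 1)

/-- `ω₀` : the class of `t⁻¹·dt` in `Ω¹_R/dR`. -/
def w0 (c : ℂ) : KaehlerDifferential ℂ (DJKM c) ⧸ dR c :=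
  cls c (tp c (-1)) (tp c 1)

/-!
The relation is the class of the exact form `d(2 t^{k-3} u³)`. Differentiating
`u² = t⁴ − 2ct² + 1` gives `u du = (2t³ − 2ct) dt`, and with `u³ = u (t⁴ − 2ct² + 1)` the
Leibniz rule turns `d(t^{k-3} u³) = (k−3) t^{k−4} u³ dt + 3 t^{k−3} u² du` into
`(k+3) t^k u dt − 2kc t^{k−2} u dt + (k−3) t^{k−4} u dt`.
-/

theorem Derivation.leibniz_of_map_add_eq_mul {R A M : Type*} [CommRing R] [CommRing A]
    [Algebra R A] [AddCommGroup M] [Module A M] [Module R M] (D : Derivation R A M)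
    {f : ℤ → A} (hf : ∀ m n, f (m + n) = f m * f n) (h0 : f 0 = 1) (n : ℤ) :
    D (f n) = n • f (n - 1) • D (f 1) := by
  induction n using Int.induction_on with
  | zero => rw [h0, D.map_one_eq_zero, zero_smul]
  | succ n ih =>
    rw [hf, D.leibniz, ih, smul_comm (f 1), smul_smul (f 1), ← hf, add_sub_cancel_right,
      add_sub_cancel, add_smul, one_smul, add_comm]
  | pred n ih =>
    have hinv : f (-1) * f 1 = 1 := by rw [← hf, neg_add_cancel, h0]
    have hsplit : f (-n) = f (-n - 1) * f 1 := by rw [← hf, sub_add_cancel]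
    have hstep : f 1 • D (f (-n - 1)) = (-n - 1 : ℤ) • f (-n - 1) • D (f 1) := by
      rw [sub_smul, one_smul, ← ih, hsplit, D.leibniz, add_sub_cancel_left]
    calc D (f (-n - 1)) = f (-1) • f 1 • D (f (-n - 1)) := by rw [smul_smul, hinv, one_smul]
      _ = (-n - 1 : ℤ) • f (-n - 1 - 1) • D (f 1) := by
        rw [hstep, smul_comm (f (-1)), smul_smul, ← hf, add_comm, ← sub_eq_add_neg]

section

variable (c : ℂ)

local notation "Ω" => KaehlerDifferential ℂ (DJKM c)
local notation "d" => KaehlerDifferential.D ℂ (DJKM c)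

theorem tp_add (m n : ℤ) : tp c (m + n) = tp c m * tp c n := by
  rw [tp, tp, tp, T_add, map_mul]

theorem tp_zero : tp c 0 = 1 := by
  rw [tp, T_zero, map_one]

theorem tp_natCast (n : ℕ) : tp c n = tp c 1 ^ n := by
  rw [tp, tp, ← map_pow, T_pow, mul_one]

theorem uu_sq : uu c ^ 2 = tp c 1 ^ 4 - 2 * algebraMap ℂ (DJKM c) c * tp c 1 ^ 2 + 1 := by
  have h := AdjoinRoot.eval₂_root ((X : Polynomial (LaurentPolynomial ℂ)) ^ 2 -
    Polynomial.C (T 4 - 2 * LaurentPolynomial.C c * T 2 + 1))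
  rw [eval₂_sub, eval₂_X_pow, Polynomial.eval₂_C, sub_eq_zero] at h
  have hC : AdjoinRoot.of _ (LaurentPolynomial.C c) = algebraMap ℂ (DJKM c) c := by
    rw [IsScalarTower.algebraMap_apply ℂ (LaurentPolynomial ℂ) (DJKM c),
      LaurentPolynomial.algebraMap_apply, Algebra.algebraMap_self_apply, AdjoinRoot.algebraMap_eq]
  rw [uu, h]
  simp only [map_add, map_sub, map_mul, map_one, map_ofNat]
  rw [← tp, ← tp, ← tp_natCast, ← tp_natCast, hC]
  rfl

theorem D_tp (n : ℤ) : d (tp c n) = n • tp c (n - 1) • d (tp c 1) :=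
  (d).leibniz_of_map_add_eq_mul (tp_add c) (tp_zero c) n

theorem uu_smul_D_uu :
    uu c • d (uu c) = (2 * tp c 1 ^ 3 - 2 * algebraMap ℂ (DJKM c) c * tp c 1) • d (tp c 1) := by
  have hd2 : d (2 : DJKM c) = 0 := by exact_mod_cast (d).map_natCast 2
  have h := (d).leibniz_pow (uu c) 2
  simp only [uu_sq, map_add, map_sub, (d).leibniz, (d).leibniz_pow, (d).map_one_eq_zero,
    (d).map_algebraMap, hd2] at h
  refine smul_right_injective Ω (two_ne_zero : (2 : ℂ) ≠ 0) ?_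
  linear_combination (norm := (match_scalars <;> simp only [map_ofNat] <;> ring)) -h

theorem D_tp_mul_uu_pow_three (k : ℤ) :
    d (tp c (k - 3) * uu c ^ 3) = (k + 3 : ℂ) • (tp c k * uu c) • d (tp c 1)
      - (2 * k * c) • (tp c (k - 2) * uu c) • d (tp c 1)
      + (k - 3 : ℂ) • (tp c (k - 4) * uu c) • d (tp c 1) := by
  have hu2 : uu c ^ 2 • d (uu c) =
      (uu c * (2 * tp c 1 ^ 3 - 2 * algebraMap ℂ (DJKM c) c * tp c 1)) • d (tp c 1) := by
    rw [sq (uu c), mul_smul, uu_smul_D_uu, smul_smul]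
  have hu3 : uu c ^ 3 = uu c * (tp c 1 ^ 4 - 2 * algebraMap ℂ (DJKM c) c * tp c 1 ^ 2 + 1) := by
    rw [pow_succ, uu_sq, mul_comm]
  have h3 : tp c (k - 3) = tp c (k - 4) * tp c 1 := by rw [← tp_add]; congr 1; ring
  have h2 : tp c (k - 2) = tp c (k - 4) * tp c 1 ^ 2 := by
    rw [← tp_natCast, ← tp_add]; congr 1; push_cast; ring
  have h0 : tp c k = tp c (k - 4) * tp c 1 ^ 4 := by
    rw [← tp_natCast, ← tp_add]; congr 1; push_cast; ring
  rw [(d).leibniz, (d).leibniz_pow, D_tp, show 3 - 1 = 2 from rfl, hu2, hu3,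
    show k - 3 - 1 = k - 4 by ring, h3, h2, h0]
  match_scalars
  simp only [map_ofNat, map_intCast]
  ring

end

/-- For every integer `k`, in `Ω¹_R/dR` one has
`(6+2k)·(t^k u dt) = −2(k−3)·(t^{k−4} u dt) + 4kc·(t^{k−2} u dt)`. -/
theorem stmt1 (c : ℂ) (k : ℤ) :
    ((6 : ℂ) + 2 * (k : ℂ)) • w c k =
      (-2 * ((k : ℂ) - 3)) • w c (k - 4) + (4 * (k : ℂ) * c) • w c (k - 2) := by
  have hexact : (Submodule.Quotient.mk (KaehlerDifferential.D ℂ (DJKM c)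
      (tp c (k - 3) * uu c ^ 3)) : KaehlerDifferential ℂ (DJKM c) ⧸ dR c) = 0 :=
    (Submodule.Quotient.mk_eq_zero _).2 ⟨_, rfl⟩
  rw [D_tp_mul_uu_pow_three, Submodule.Quotient.mk_add, Submodule.Quotient.mk_sub,
    Submodule.Quotient.mk_smul _ (_ : ℂ), Submodule.Quotient.mk_smul _ (_ : ℂ),
    Submodule.Quotient.mk_smul _ (_ : ℂ)] at hexact
  change (k + 3 : ℂ) • w c k - (2 * k * c) • w c (k - 2) + (k - 3 : ℂ) • w c (k - 4) = 0 at hexact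
  linear_combination (norm := module) (2 : ℂ) • hexact
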